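/- For H ⊆ ℤ symmetric with 0, 1 ∈ H: the supremum of |ψ(1)| over complex-valued positive definite ψ on ℤ with ψ(0) = 1 and supp ψ ⊆ H equals the supremum over real-valued such ψ (i.e., 𝒞ℱ^♯(H) = 𝒦^♯(H)); the same holds in the finitely supported classes. -/

import Mathlib

open Complex ComplexOrder Finset MeasureTheory

noncomputable section

/-- A function on an abelian group is positive definite if all the
associated quadratic forms are nonnegative (as complex numbers, i.e.
real and nonnegative). -/
def IsPosDef {G : Type*} [AddCommGroup G] (f : G → ℂ) : Prop :=
  ∀ (n : ℕ) (x : Fin n → G) (c : Fin n → ℂ),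
    0 ≤ ∑ j, ∑ k, c j * (starRingEnd ℂ) (c k) * f (x j - x k)

namespace IsPosDef

variable {G : Type*} [AddCommGroup G] {f g : G → ℂ}

lemma add (hf : IsPosDef f) (hg : IsPosDef g) : IsPosDef (f + g) := by
  intro n x c
  simpa only [Pi.add_apply, mul_add, sum_add_distrib] using add_nonneg (hf n x c) (hg n x c)

lemma const_mul (hf : IsPosDef f) {r : ℂ} (hr : 0 ≤ r) : IsPosDef (fun x => r * f x) := by
  intro n x c
  have h := mul_nonneg hr (hf n x c)
  simp only [mul_sum] at h
  convert h using 3 with j _ k _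
  ring

/-- The quadratic form of `conj ∘ f` at `c` is the conjugate of that of `f` at `conj ∘ c`. -/
lemma conj (hf : IsPosDef f) : IsPosDef (fun x => starRingEnd ℂ (f x)) := by
  intro n x c
  have h := hf n x (fun j => starRingEnd ℂ (c j))
  rw [← star_nonneg_iff, Complex.star_def] at h
  simpa only [map_sum, map_mul, Complex.conj_conj] using h

lemma re (hf : IsPosDef f) : IsPosDef (fun x => ((f x).re : ℂ)) := by
  have h := (hf.add hf.conj).const_mul (r := 2⁻¹) (by norm_num [Complex.le_def])
  convert h using 2 with x
  rw [Pi.add_apply, Complex.add_conj]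
  push_cast
  ring

lemma mul_addChar (hf : IsPosDef f) (χ : AddChar G Circle) :
    IsPosDef (fun x => f x * (χ x : ℂ)) := by
  intro n x c
  have h := hf n x (fun j => c j * χ (x j))
  convert h using 3 with j _ k _
  dsimp only
  rw [AddChar.map_sub_eq_div, div_eq_mul_inv, Circle.coe_mul, Circle.coe_inv_eq_conj, map_mul]
  ring

end IsPosDef

/-- Rotating `ψ` by the character `k ↦ e^{-i k arg ψ(1)}` makes `ψ(1)` real and nonnegative,
and taking real parts then gives a real positive definite function. -/
lemma IsPosDef.exists_real_abs_eq_norm {ψ : ℤ → ℂ} (hψ : IsPosDef ψ) :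
    ∃ φ : ℤ → ℝ, IsPosDef (fun n => (φ n : ℂ)) ∧ φ 0 = (ψ 0).re ∧
      Function.support φ ⊆ Function.support ψ ∧ |φ 1| = ‖ψ 1‖ := by
  set z := Circle.exp (-(ψ 1).arg)
  let χ : AddChar ℤ Circle := ⟨(z ^ ·), zpow_zero z, zpow_add z⟩
  have hχ1 : ψ 1 * (χ 1 : ℂ) = ‖ψ 1‖ := by
    calc ψ 1 * (χ 1 : ℂ) = ‖ψ 1‖ * exp ((ψ 1).arg * I) * exp (-(ψ 1).arg * I) := by
          rw [Complex.norm_mul_exp_arg_mul_I]; simp [χ, z, Circle.coe_exp, ← Complex.exp_neg]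
      _ = ‖ψ 1‖ := by rw [mul_assoc, ← Complex.exp_add]; simp
  refine ⟨fun k => (ψ k * χ k).re, (hψ.mul_addChar χ).re, by simp, fun k hk => ?_, ?_⟩
  · contrapose! hk
    simp [Function.notMem_support.mp hk]
  · simp only [hχ1, Complex.ofReal_re, abs_norm]

lemma setOf_norm_posDef_eq_setOf_abs (P : Set ℤ → Prop) (hP : ∀ ⦃S T⦄, S ⊆ T → P T → P S) :
    {s : ℝ | ∃ ψ : ℤ → ℂ, IsPosDef ψ ∧ ψ 0 = 1 ∧ P (Function.support ψ) ∧ ‖ψ 1‖ = s} =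
      {s : ℝ | ∃ φ : ℤ → ℝ, IsPosDef (fun n => (φ n : ℂ)) ∧ φ 0 = 1 ∧
        P (Function.support φ) ∧ |φ 1| = s} := by
  ext s
  constructor
  · rintro ⟨ψ, hψ, hψ0, hP_ψ, rfl⟩
    obtain ⟨φ, hφ, hφ0, hsupp, hφ1⟩ := hψ.exists_real_abs_eq_norm
    exact ⟨φ, hφ, by simp [hφ0, hψ0], hP hsupp hP_ψ, hφ1⟩
  · rintro ⟨φ, hφ, hφ0, hP_φ, rfl⟩
    have hsupp : Function.support (fun n => (φ n : ℂ)) = Function.support φ := by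
      ext n; simp
    exact ⟨_, hφ, by simp [hφ0], hsupp ▸ hP_φ, by simp⟩

theorem stmt16_general (H : Set ℤ) :
    sSup {s : ℝ | ∃ ψ : ℤ → ℂ, IsPosDef ψ ∧ ψ 0 = 1 ∧
        (∀ n ∉ H, ψ n = 0) ∧ ‖ψ 1‖ = s} =
      sSup {s : ℝ | ∃ ψ : ℤ → ℝ, IsPosDef (fun n => ((ψ n : ℝ) : ℂ)) ∧ ψ 0 = 1 ∧
        (∀ n ∉ H, ψ n = 0) ∧ |ψ 1| = s} ∧
    sSup {s : ℝ | ∃ ψ : ℤ → ℂ, IsPosDef ψ ∧ ψ 0 = 1 ∧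
        (∀ n ∉ H, ψ n = 0) ∧ (Function.support ψ).Finite ∧ ‖ψ 1‖ = s} =
      sSup {s : ℝ | ∃ ψ : ℤ → ℝ, IsPosDef (fun n => ((ψ n : ℝ) : ℂ)) ∧ ψ 0 = 1 ∧
        (∀ n ∉ H, ψ n = 0) ∧ (Function.support ψ).Finite ∧ |ψ 1| = s} := by
  refine ⟨congrArg sSup ?_, congrArg sSup ?_⟩
  · simpa only [Function.support_subset_iff'] using
      setOf_norm_posDef_eq_setOf_abs (· ⊆ H) fun _ _ hST hT => hST.trans hT
  · simpa only [Function.support_subset_iff', and_assoc] using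
      setOf_norm_posDef_eq_setOf_abs (fun S => S ⊆ H ∧ S.Finite)
        fun _ _ hST hT => ⟨hST.trans hT.1, hT.2.subset hST⟩

theorem stmt16 (H : Set ℤ) (hsym : ∀ x ∈ H, -x ∈ H)
    (h0 : (0 : ℤ) ∈ H) (h1 : (1 : ℤ) ∈ H) :
    sSup {s : ℝ | ∃ ψ : ℤ → ℂ, IsPosDef ψ ∧ ψ 0 = 1 ∧
        (∀ n ∉ H, ψ n = 0) ∧ ‖ψ 1‖ = s} =
      sSup {s : ℝ | ∃ ψ : ℤ → ℝ, IsPosDef (fun n => ((ψ n : ℝ) : ℂ)) ∧ ψ 0 = 1 ∧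
        (∀ n ∉ H, ψ n = 0) ∧ |ψ 1| = s} ∧
    sSup {s : ℝ | ∃ ψ : ℤ → ℂ, IsPosDef ψ ∧ ψ 0 = 1 ∧
        (∀ n ∉ H, ψ n = 0) ∧ (Function.support ψ).Finite ∧ ‖ψ 1‖ = s} =
      sSup {s : ℝ | ∃ ψ : ℤ → ℝ, IsPosDef (fun n => ((ψ n : ℝ) : ℂ)) ∧ ψ 0 = 1 ∧
        (∀ n ∉ H, ψ n = 0) ∧ (Function.support ψ).Finite ∧ |ψ 1| = s} :=
  stmt16_general H
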